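/- For a set partition ρ of {1,...,n} with crossing graph G(ρ) = (V,E), the sum Σ μ(π,1̂) over set partitions π of V such that no block of π contains both endpoints of any edge of E equals (-1)^{#ρ+1} T_{G(ρ)}(1,0) if ρ is connected, and 0 otherwise. -/

import Mathlib

open Finset

noncomputable section
open scoped Classical

/-- Set partitions of a finite type, as finpartitions of `Finset.univ`. -/
abbrev SetPart (β : Type) [Fintype β] [DecidableEq β] := Finpartition (Finset.univ : Finset β)

instance finpartitionFintype {β : Type} [Fintype β] [DecidableEq β] (s : Finset β) :
    Fintype (Finpartition s) :=
  Fintype.ofInjective Finpartition.parts fun a b h => by cases a; cases b; cases h; rfl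

/-- The one-block partition `1̂`, the maximal element of the partition lattice. -/
def onePart (β : Type) [Fintype β] [DecidableEq β] : SetPart β :=
  Finpartition.ofErase {Finset.univ} (Finset.supIndep_singleton _ _) Finset.sup_singleton

/-- The Möbius function of a finite poset, via Philip Hall's theorem:
`μ(a,b) = ∑ₖ (-1)^k · #{chains a = x₀ < x₁ < ⋯ < x_k = b}`. -/
def mob {α : Type} [Fintype α] [PartialOrder α] (a b : α) : ℤ :=
  ∑ k ∈ Finset.range (Fintype.card α + 1), (-1) ^ k *
    ((Finset.univ : Finset (Fin (k + 1) → α)).filter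
      (fun c => c 0 = a ∧ c (Fin.last k) = b ∧ ∀ i : Fin k, c i.castSucc < c i.succ)).card

/-- Two blocks `b`, `c` cross: there are `i < k < j < l` with `i, j ∈ b` and `k, l ∈ c`. -/
def Crosses {α : Type} [LinearOrder α] [DecidableEq α] (b c : Finset α) : Prop :=
  ∃ i ∈ b, ∃ j ∈ b, ∃ k ∈ c, ∃ l ∈ c, i < k ∧ k < j ∧ j < l

/-- Number of crossings among a collection of blocks (for a matching, each crossing
is counted exactly once, since exactly one of the two orders crosses). -/
def croPairs {α : Type} [LinearOrder α] [DecidableEq α] (P : Finset (Finset α)) : ℕ :=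
  ((P ×ˢ P).filter fun p => Crosses p.1 p.2).card

/-- A matching: a set partition all of whose blocks have size `2`. -/
def IsMatching {β : Type} [DecidableEq β] {s : Finset β} (σ : Finpartition s) : Prop :=
  ∀ b ∈ σ.parts, b.card = 2

/-- Number of crossings of `σ`. -/
def cro {β : Type} [LinearOrder β] [DecidableEq β] {s : Finset β} (σ : Finpartition s) : ℕ :=
  croPairs σ.parts

/-- `cro(σ,π)`: the number of crossings of `σ` whose four points lie in one block of `π`. -/
def cro2 {β : Type} [LinearOrder β] [Fintype β] [DecidableEq β] (σ π : SetPart β) : ℕ :=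
  ((σ.parts ×ˢ σ.parts).filter fun p =>
    Crosses p.1 p.2 ∧ ∃ B ∈ π.parts, p.1 ∪ p.2 ⊆ B).card

/-- `P` is (the set of blocks of) a matching of the finite set `b`. -/
def IsMatchingOn {β : Type} [DecidableEq β] (P : Finset (Finset β)) (b : Finset β) : Prop :=
  (∀ c ∈ P, c.card = 2) ∧ (P : Set (Finset β)).PairwiseDisjoint id ∧ P.sup id = b

/-- Matching generating polynomial of a finite set `s`, by number of crossings. -/
def mGen {β : Type} [LinearOrder β] [Fintype β] [DecidableEq β] (s : Finset β) : Polynomial ℤ :=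
  ∑ σ ∈ (Finset.univ : Finset (Finpartition s)).filter (fun σ => IsMatching σ),
    Polynomial.X ^ cro σ

/-- The moment `m_k(q)` of the `q`-semicircular law: number of matchings of `{1, …, k}`
counted by crossings (zero for `k` odd). -/
def mNat (k : ℕ) : Polynomial ℤ := mGen (Finset.univ : Finset (Fin k))

/-- `I` is an interval. -/
def IsInterval {β : Type} [LinearOrder β] (I : Finset β) : Prop :=
  ∀ a ∈ I, ∀ b ∈ I, ∀ c, a ≤ c → c ≤ b → c ∈ I

/-- A connected set partition: no proper nonempty interval is a union of blocks. -/
def IsConnectedP {β : Type} [LinearOrder β] [Fintype β] [DecidableEq β] (π : SetPart β) : Prop :=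
  ∀ I : Finset β, I.Nonempty → I ≠ Finset.univ → IsInterval I →
    ¬ (∀ b ∈ π.parts, b ⊆ I ∨ Disjoint b I)

/-- The crossing graph of a set partition: vertices are the blocks,
edges are the crossing pairs of blocks. -/
def crossGraph {β : Type} [LinearOrder β] [DecidableEq β] {s : Finset β} (σ : Finpartition s) :
    SimpleGraph {b // b ∈ σ.parts} where
  Adj b c := b ≠ c ∧ (Crosses b.1 c.1 ∨ Crosses c.1 b.1)
  symm := ⟨fun _ _ h => ⟨h.1.symm, h.2.symm⟩⟩
  loopless := ⟨fun _ h => h.1 rfl⟩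

/-- The Tutte polynomial of a simple graph, evaluated at `(x, y)`, via the
Whitney rank sum `T_G(x,y) = ∑_{A ⊆ E} (x-1)^(r(E) - r(A)) (y-1)^(|A| - r(A))`
where `r(A) = |V| - #components of (V, A)`. -/
def tutteG {V : Type} [Fintype V] {R : Type} [CommRing R] (G : SimpleGraph V) (x y : R) : R :=
  letI : Fintype G.edgeSet := Fintype.ofFinite _
  let rk : Finset (Sym2 V) → ℕ := fun A =>
    Fintype.card V - Nat.card (SimpleGraph.fromEdgeSet (↑A : Set (Sym2 V))).ConnectedComponent
  ∑ A ∈ G.edgeSet.toFinset.powerset,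
    (x - 1) ^ (rk G.edgeSet.toFinset - rk A) * (y - 1) ^ (A.card - rk A)

/-- The simple graph underlying the edge subset `A` of a multigraph with
edge-endpoint map `ends`. -/
def mgSimple {V E : Type} (ends : E → Sym2 V) (A : Set E) : SimpleGraph V :=
  SimpleGraph.fromEdgeSet (ends '' A)

/-- Rank of an edge subset of a multigraph. -/
def mgRank {V E : Type} [Fintype V] (ends : E → Sym2 V) (A : Set E) : ℕ :=
  Fintype.card V - Nat.card (mgSimple ends A).ConnectedComponent

/-- The Tutte polynomial of a multigraph (possibly with loops and multiple edges),
via the Whitney rank sum. -/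
def tutteM {V E : Type} [Fintype V] [Fintype E] {R : Type} [CommRing R]
    (ends : E → Sym2 V) (x y : R) : R :=
  ∑ A ∈ (Finset.univ : Finset E).powerset,
    (x - 1) ^ (mgRank ends Set.univ - mgRank ends ↑A) * (y - 1) ^ (A.card - mgRank ends ↑A)

/-- `i(E,π)`: the number of edges both of whose endpoints lie in the same block of `π`. -/
def iE {V E : Type} [Fintype V] [DecidableEq V] [Fintype E] (ends : E → Sym2 V) (π : SetPart V) : ℕ :=
  (Finset.univ.filter fun e : E => ∃ b ∈ π.parts, ∀ v ∈ ends e, v ∈ b).card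

/-- `U_G(q) = (q-1)^{-(n-1)} ∑_{π ∈ P(V)} q^{i(E,π)} μ(π, 1̂)`. -/
def Ugraph {V E : Type} [Fintype V] [DecidableEq V] [Fintype E] (ends : E → Sym2 V) (q : ℚ) : ℚ :=
  ((q - 1) ^ (Fintype.card V - 1))⁻¹ *
    ∑ π : SetPart V, q ^ (iE ends π) * (mob π (onePart V) : ℚ)

/-- `D` is an orientation of the simple graph `G`. -/
def IsOrientation {V : Type} (G : SimpleGraph V) (D : V → V → Prop) : Prop :=
  (∀ a b, D a b → G.Adj a b) ∧ ∀ a b, G.Adj a b → (D a b ↔ ¬ D b a)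

/-- An orientation (directed relation) is acyclic. -/
def DAcyclic {V : Type} (D : V → V → Prop) : Prop := ∀ a, ¬ Relation.TransGen D a a

/-- `v` is a source: no incoming edges. -/
def IsSource {V : Type} (D : V → V → Prop) (v : V) : Prop := ∀ u, ¬ D u v

/-- Every vertex is reachable from `r` by a directed path. -/
def RootConn {V : Type} (D : V → V → Prop) (r : V) : Prop :=
  ∀ v, Relation.ReflTransGen D r v

/-- The classical cumulants `k_N(q)` of the `q`-semicircular law, via Möbius inversion:
`k_N(q) = ∑_{π ∈ P(N)} m_π(q) μ(π, 1̂)`. -/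
def kq (N : ℕ) : Polynomial ℤ :=
  ∑ π : SetPart (Fin N), (∏ b ∈ π.parts, mNat b.card) * Polynomial.C (mob π (onePart (Fin N)))

/-- Formal logarithm of a power series (with constant term `1`):
`log F = ∑_{k ≥ 1} (-1)^(k+1) (F-1)^k / k`. -/
def pslog {R : Type} [CommRing R] [Algebra ℚ R] (F : PowerSeries R) : PowerSeries R :=
  PowerSeries.mk fun n => ∑ k ∈ Finset.range (n + 1),
    ((-1) ^ (k + 1) / k : ℚ) • (PowerSeries.coeff n ((F - 1) ^ k))

/-- A noncrossing set partition. -/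
def IsNC {β : Type} [LinearOrder β] [Fintype β] [DecidableEq β] (π : SetPart β) : Prop :=
  ∀ b ∈ π.parts, ∀ c ∈ π.parts, b ≠ c → ¬ Crosses b c

/-- The poset of noncrossing partitions, as a subposet of the partition lattice. -/
abbrev NCPart (β : Type) [LinearOrder β] [Fintype β] [DecidableEq β] := {π : SetPart β // IsNC π}

/-- The one-block partition as a noncrossing partition. -/
def ncTop (β : Type) [LinearOrder β] [Fintype β] [DecidableEq β] : NCPart β :=
  ⟨onePart β, by
    intro b hb c hc hne
    exfalso; apply hne
    have hb' : b ∈ ({(Finset.univ : Finset β)} : Finset (Finset β)).erase ⊥ := hb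
    have hc' : c ∈ ({(Finset.univ : Finset β)} : Finset (Finset β)).erase ⊥ := hc
    rw [Finset.mem_singleton.mp (Finset.mem_of_mem_erase hb'),
      Finset.mem_singleton.mp (Finset.mem_of_mem_erase hc')]⟩

/-- The free cumulants `c_N(q)`, via noncrossing Möbius inversion:
`c_N(q) = ∑_{π ∈ NC(N)} m_π(q) μ^{NC}(π, 1̂)`. -/
def cq (N : ℕ) : Polynomial ℤ :=
  ∑ π : NCPart (Fin N), (∏ b ∈ π.1.parts, mNat b.card) * Polynomial.C (mob π (ncTop (Fin N)))

/-- Moments of the free Poisson law: `m_k(λ) = ∑_{π ∈ NC(k)} λ^{#π}`. -/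
def mP (k : ℕ) : Polynomial ℚ := ∑ π : NCPart (Fin k), Polynomial.X ^ π.1.parts.card

section Mob

variable {α : Type} [Fintype α] [PartialOrder α]

lemma fin_le_apply {n : ℕ} {f : Fin n → Fin n} (hf : StrictMono f) : ∀ i, i ≤ f i := by
  suffices H : ∀ m, ∀ i : Fin n, (i : ℕ) = m → m ≤ (f i : ℕ) by
    intro i
    rw [Fin.le_def]
    exact H i i rfl
  intro m
  induction m with
  | zero => exact fun i _ => Nat.zero_le _
  | succ m ihm =>
      intro i him
      have hlt : m < n := by omega
      have h2 : f ⟨m, hlt⟩ < f i := hf (by rw [Fin.lt_def]; simp; omega)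
      have h3 := ihm ⟨m, hlt⟩ rfl
      rw [Fin.lt_def] at h2
      omega

lemma strictMono_image_eq {k : ℕ} {c d : Fin (k+1) → α} (hc : StrictMono c)
    (hd : StrictMono d) (h : Finset.image c Finset.univ = Finset.image d Finset.univ) :
    c = d := by
  have hex : ∀ i, ∃ j, d j = c i := by
    intro i
    have : c i ∈ Finset.image d Finset.univ := by
      rw [← h]; exact mem_image_of_mem c (mem_univ i)
    obtain ⟨j, _, hj⟩ := mem_image.mp this
    exact ⟨j, hj⟩
  have hex' : ∀ j, ∃ i, c i = d j := by
    intro j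
    have : d j ∈ Finset.image c Finset.univ := by
      rw [h]; exact mem_image_of_mem d (mem_univ j)
    obtain ⟨i, _, hi⟩ := mem_image.mp this
    exact ⟨i, hi⟩
  set φ : Fin (k+1) → Fin (k+1) := fun i => Classical.choose (hex i) with hφdef
  have hφ : ∀ i, d (φ i) = c i := fun i => Classical.choose_spec (hex i)
  set ψ : Fin (k+1) → Fin (k+1) := fun j => Classical.choose (hex' j) with hψdef
  have hψ : ∀ j, c (ψ j) = d j := fun j => Classical.choose_spec (hex' j)
  have hφm : StrictMono φ := by
    intro i i' hii
    have : d (φ i) < d (φ i') := by rw [hφ, hφ]; exact hc hii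
    exact hd.lt_iff_lt.mp this
  have hψm : StrictMono ψ := by
    intro j j' hjj
    have : c (ψ j) < c (ψ j') := by rw [hψ, hψ]; exact hd hjj
    exact hc.lt_iff_lt.mp this
  funext i
  have h1 : c (ψ (φ i)) = c i := by rw [hψ, hφ]
  have h2 : ψ (φ i) = i := hc.injective h1
  have h3 : i ≤ φ i := fin_le_apply hφm i
  have h4 : φ i ≤ ψ (φ i) := fin_le_apply hψm (φ i)
  rw [h2] at h4
  have : φ i = i := le_antisymm h4 h3
  rw [← hφ i, this]

lemma chain_enum : ∀ (k : ℕ) (S : Finset α), IsChain (· ≤ ·) (↑S : Set α) → S.card = k + 1 →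
    ∃ c : Fin (k+1) → α, (∀ i : Fin k, c i.castSucc < c i.succ) ∧
      Finset.image c Finset.univ = S := by
  intro k
  induction k with
  | zero =>
      intro S _ hcard
      obtain ⟨m, rfl⟩ := Finset.card_eq_one.mp hcard
      refine ⟨fun _ => m, fun i => i.elim0, ?_⟩
      rw [Finset.image_const univ_nonempty]
  | succ k ih =>
      intro S hchain hcard
      have hne : S.Nonempty := by rw [← Finset.card_pos, hcard]; omega
      obtain ⟨m, hm, hmin⟩ := S.exists_minimal hne
      have hleast : ∀ x ∈ S, m ≤ x := by
        intro x hx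
        rcases eq_or_ne x m with rfl | hne'
        · exact le_rfl
        · rcases hchain hx hm hne' with h | h
          · exact absurd (lt_of_le_of_ne h hne') (fun hlt => lt_irrefl x (lt_of_lt_of_le hlt (hmin hx hlt.le)))
          · exact h
      set S' := S.erase m with hS'
      have hcard' : S'.card = k + 1 := by
        rw [hS', Finset.card_erase_of_mem hm, hcard]
        omega
      have hchain' : IsChain (· ≤ ·) (↑S' : Set α) :=
        hchain.mono (by rw [hS']; exact_mod_cast Finset.coe_subset.mpr (Finset.erase_subset _ _))
      obtain ⟨c', hc'mono, hc'img⟩ := ih S' hchain' hcard'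
      have hmemS' : ∀ j, c' j ∈ S' := by
        intro j
        rw [← hc'img]
        exact mem_image_of_mem c' (mem_univ j)
      refine ⟨Fin.cons m c', ?_, ?_⟩
      · intro i
        induction i using Fin.cases with
        | zero =>
            have h0 : (0 : Fin (k+1+1)) = Fin.castSucc 0 := rfl
            rw [show (Fin.castSucc (0 : Fin (k+1))) = 0 from rfl, Fin.cons_zero,
              show (Fin.succ (0 : Fin (k+1))) = (0 : Fin (k+1)).succ from rfl, Fin.cons_succ]
            have := hmemS' 0
            rw [hS', Finset.mem_erase] at this
            exact lt_of_le_of_ne (hleast _ this.2) (Ne.symm this.1)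
        | succ j =>
            rw [← Fin.succ_castSucc, Fin.cons_succ, Fin.cons_succ]
            exact hc'mono j
      · ext x
        simp only [Finset.mem_image, Finset.mem_univ, true_and]
        constructor
        · rintro ⟨i, rfl⟩
          induction i using Fin.cases with
          | zero => rw [Fin.cons_zero]; exact hm
          | succ j =>
              rw [Fin.cons_succ]
              exact Finset.mem_of_mem_erase (hmemS' j)
        · intro hx
          rcases eq_or_ne x m with rfl | hne'
          · exact ⟨0, Fin.cons_zero _ _⟩
          · have : x ∈ S' := by rw [hS', Finset.mem_erase]; exact ⟨hne', hx⟩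
            rw [← hc'img] at this
            obtain ⟨j, _, hj⟩ := mem_image.mp this
            exact ⟨j.succ, by rw [Fin.cons_succ]; exact hj⟩

end Mob

section Mob2
set_option linter.unusedSectionVars false

variable {α : Type} [Fintype α] [PartialOrder α]

lemma chain_least (S : Finset α) (hchain : IsChain (· ≤ ·) (↑S : Set α)) (hne : S.Nonempty) :
    ∃ m ∈ S, ∀ x ∈ S, m ≤ x := by
  obtain ⟨m, hm, hmin⟩ := S.exists_minimal hne
  refine ⟨m, hm, fun x hx => ?_⟩
  rcases eq_or_ne x m with rfl | hne'
  · exact le_rfl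
  · rcases hchain hx hm hne' with h | h
    · exact absurd (lt_of_le_of_ne h hne') (fun hlt => lt_irrefl x (lt_of_lt_of_le hlt (hmin hx hlt.le)))
    · exact h

def chainsAB (a b : α) : Finset (Finset α) :=
  Finset.univ.filter fun S => IsChain (· ≤ ·) (↑S : Set α) ∧ a ∈ S ∧ b ∈ S ∧
    ∀ x ∈ S, a ≤ x ∧ x ≤ b

lemma mem_chainsAB {a b : α} {S : Finset α} : S ∈ chainsAB a b ↔
    IsChain (· ≤ ·) (↑S : Set α) ∧ a ∈ S ∧ b ∈ S ∧ ∀ x ∈ S, a ≤ x ∧ x ≤ b := by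
  simp [chainsAB]

lemma mob_eq_sum_chains (a b : α) :
    mob a b = ∑ S ∈ chainsAB a b, (-1 : ℤ) ^ (S.card + 1) := by
  have hmaps : ∀ S ∈ chainsAB a b, S.card - 1 ∈ Finset.range (Fintype.card α + 1) := by
    intro S _
    rw [Finset.mem_range]
    have := S.card_le_univ
    omega
  rw [mob, ← Finset.sum_fiberwise_of_maps_to hmaps]
  apply Finset.sum_congr rfl
  intro k _
  have hfil : (chainsAB a b).filter (fun S => S.card - 1 = k) =
      (chainsAB a b).filter (fun S => S.card = k + 1) := by
    apply Finset.filter_congr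
    intro S hS
    have ha : a ∈ S := (mem_chainsAB.mp hS).2.1
    have h1 : 1 ≤ S.card := Finset.card_pos.mpr ⟨a, ha⟩
    constructor <;> intro h <;> omega
  rw [hfil]
  have hcard : ((Finset.univ : Finset (Fin (k + 1) → α)).filter
      (fun c => c 0 = a ∧ c (Fin.last k) = b ∧ ∀ i : Fin k, c i.castSucc < c i.succ)).card =
      ((chainsAB a b).filter (fun S => S.card = k + 1)).card := by
    apply Finset.card_bij (fun c _ => Finset.image c Finset.univ)
    · intro c hc
      rw [Finset.mem_filter] at hc
      obtain ⟨-, h0, hlast, hconsec⟩ := hc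
      have hSM : StrictMono c := Fin.strictMono_iff_lt_succ.mpr hconsec
      rw [Finset.mem_filter, mem_chainsAB]
      refine ⟨⟨?_, ?_, ?_, ?_⟩, ?_⟩
      · intro x hx y hy hxy
        simp only [Finset.coe_image, Set.mem_image, Finset.mem_coe] at hx hy
        obtain ⟨i, _, rfl⟩ := hx
        obtain ⟨j, _, rfl⟩ := hy
        rcases le_total i j with h | h
        · exact Or.inl (hSM.monotone h)
        · exact Or.inr (hSM.monotone h)
      · exact Finset.mem_image.mpr ⟨0, Finset.mem_univ _, h0⟩
      · exact Finset.mem_image.mpr ⟨Fin.last k, Finset.mem_univ _, hlast⟩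
      · intro x hx
        obtain ⟨i, _, rfl⟩ := Finset.mem_image.mp hx
        exact ⟨h0 ▸ hSM.monotone (Fin.zero_le i), hlast ▸ hSM.monotone (Fin.le_last i)⟩
      · rw [Finset.card_image_of_injective _ hSM.injective, Finset.card_univ, Fintype.card_fin]
    · intro c hc c' hc' h
      rw [Finset.mem_filter] at hc hc'
      exact strictMono_image_eq (Fin.strictMono_iff_lt_succ.mpr hc.2.2.2)
        (Fin.strictMono_iff_lt_succ.mpr hc'.2.2.2) h
    · intro S hS
      rw [Finset.mem_filter, mem_chainsAB] at hS
      obtain ⟨⟨hchain, haS, hbS, hbd⟩, hcard⟩ := hS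
      obtain ⟨c, hconsec, himg⟩ := chain_enum k S hchain hcard
      have hSM : StrictMono c := Fin.strictMono_iff_lt_succ.mpr hconsec
      have hc0 : c 0 = a := by
        obtain ⟨i, _, hi⟩ := Finset.mem_image.mp (himg ▸ haS)
        have h1 : c 0 ≤ c i := hSM.monotone (Fin.zero_le i)
        have h2 : a ≤ c 0 := (hbd (c 0) (himg ▸ Finset.mem_image_of_mem c (Finset.mem_univ 0))).1
        rw [hi] at h1
        exact le_antisymm h1 h2
      have hcl : c (Fin.last k) = b := by
        obtain ⟨i, _, hi⟩ := Finset.mem_image.mp (himg ▸ hbS)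
        have h1 : c i ≤ c (Fin.last k) := hSM.monotone (Fin.le_last i)
        have h2 : c (Fin.last k) ≤ b :=
          (hbd _ (himg ▸ Finset.mem_image_of_mem c (Finset.mem_univ _))).2
        rw [hi] at h1
        exact le_antisymm h2 h1
      exact ⟨c, Finset.mem_filter.mpr ⟨Finset.mem_univ _, hc0, hcl, hconsec⟩, himg⟩
  rw [hcard, Finset.sum_congr rfl (fun S hS => by
    rw [(Finset.mem_filter.mp hS).2]), Finset.sum_const, nsmul_eq_mul]
  have : (-1 : ℤ) ^ (k + 1 + 1) = (-1) ^ k := by rw [pow_succ, pow_succ]; ring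
  rw [this]
  ring

lemma mob_self (b : α) : mob b b = 1 := by
  rw [mob_eq_sum_chains]
  have : chainsAB b b = {{b}} := by
    ext S
    rw [mem_chainsAB, Finset.mem_singleton]
    constructor
    · rintro ⟨-, hbS, -, hbd⟩
      apply Finset.eq_singleton_iff_unique_mem.mpr
      exact ⟨hbS, fun x hx => le_antisymm (hbd x hx).2 (hbd x hx).1⟩
    · rintro rfl
      refine ⟨?_, Finset.mem_singleton_self b, Finset.mem_singleton_self b, ?_⟩
      · intro x hx y hy _
        simp only [Finset.coe_singleton, Set.mem_singleton_iff] at hx hy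
        subst hx; subst hy; exact Or.inl le_rfl
      · intro x hx
        rw [Finset.mem_singleton] at hx
        subst hx; exact ⟨le_rfl, le_rfl⟩
  rw [this, Finset.sum_singleton, Finset.card_singleton]
  norm_num

lemma sum_mob_lt {a b : α} (hab : a < b) :
    ∑ c ∈ Finset.univ.filter (fun c => a ≤ c ∧ c ≤ b), mob c b = 0 := by
  have hrw : ∀ c ∈ Finset.univ.filter (fun c => a ≤ c ∧ c ≤ b),
      mob c b = ∑ S ∈ chainsAB c b, (-1 : ℤ) ^ (S.card + 1) :=
    fun c _ => mob_eq_sum_chains c b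
  rw [Finset.sum_congr rfl hrw]
  set D : Finset (Finset α) := Finset.univ.filter
    (fun S : Finset α => S.Nonempty ∧ IsChain (· ≤ ·) (↑S : Set α) ∧ b ∈ S ∧
      ∀ x ∈ S, a ≤ x ∧ x ≤ b) with hD
  have hdisj : (↑(Finset.univ.filter (fun c => a ≤ c ∧ c ≤ b)) : Set α).PairwiseDisjoint
      (fun c => chainsAB c b) := by
    intro c _ c' _ hne
    simp only [Function.onFun]
    rw [Finset.disjoint_left]
    intro S hS hS'
    rw [mem_chainsAB] at hS hS'
    exact hne (le_antisymm ((hS.2.2.2 c' hS'.2.1).1) ((hS'.2.2.2 c hS.2.1).1))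
  have hbi : (Finset.univ.filter (fun c => a ≤ c ∧ c ≤ b)).biUnion (fun c => chainsAB c b) = D := by
    ext S
    rw [Finset.mem_biUnion, hD, Finset.mem_filter]
    constructor
    · rintro ⟨c, hc, hS⟩
      rw [Finset.mem_filter] at hc
      rw [mem_chainsAB] at hS
      obtain ⟨hchain, hcS, hbS, hbd⟩ := hS
      exact ⟨Finset.mem_univ _, ⟨c, hcS⟩, hchain, hbS,
        fun x hx => ⟨le_trans hc.2.1 (hbd x hx).1, (hbd x hx).2⟩⟩
    · rintro ⟨-, hne, hchain, hbS, hbd⟩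
      obtain ⟨m, hm, hleast⟩ := chain_least S hchain hne
      refine ⟨m, Finset.mem_filter.mpr ⟨Finset.mem_univ _, (hbd m hm).1, (hbd m hm).2⟩,
        mem_chainsAB.mpr ⟨hchain, hm, hbS, fun x hx => ⟨hleast x hx, (hbd x hx).2⟩⟩⟩
  rw [← Finset.sum_biUnion hdisj, hbi]
  apply Finset.sum_involution
    (g := fun S _ => if a ∈ S then S.erase a else insert a S)
  · intro S hS
    rw [hD, Finset.mem_filter] at hS
    obtain ⟨-, -, -, -, hbd⟩ := hS
    by_cases haS : a ∈ S
    · simp only [haS, if_true]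
      have h1 : 1 ≤ S.card := Finset.card_pos.mpr ⟨a, haS⟩
      have he : S.card = (S.erase a).card + 1 := by
        rw [Finset.card_erase_of_mem haS]; omega
      rw [he, pow_succ, pow_succ]
      ring
    · simp only [haS, if_false]
      rw [Finset.card_insert_of_notMem haS, pow_succ, pow_succ]
      ring
  · intro S _ _
    by_cases haS : a ∈ S
    · simp only [haS, if_true]
      intro heq
      have := Finset.notMem_erase a S
      rw [heq] at this
      exact this haS
    · simp only [haS, if_false]
      intro heq
      exact haS (heq ▸ Finset.mem_insert_self a S)
  · intro S hS
    by_cases haS : a ∈ S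
    · rw [if_pos haS, if_neg (Finset.notMem_erase a S)]
      exact Finset.insert_erase haS
    · rw [if_neg haS, if_pos (Finset.mem_insert_self a S)]
      exact Finset.erase_insert haS
  · intro S hS
    rw [hD, Finset.mem_filter] at hS ⊢
    obtain ⟨-, hne, hchain, hbS, hbd⟩ := hS
    by_cases haS : a ∈ S
    · simp only [haS, if_true]
      refine ⟨Finset.mem_univ _, ⟨b, Finset.mem_erase.mpr ⟨hab.ne', hbS⟩⟩,
        hchain.mono ?_, Finset.mem_erase.mpr ⟨hab.ne', hbS⟩, fun x hx => hbd x (Finset.mem_of_mem_erase hx)⟩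
      exact_mod_cast Finset.coe_subset.mpr (Finset.erase_subset _ _)
    · simp only [haS, if_false]
      refine ⟨Finset.mem_univ _, ⟨a, Finset.mem_insert_self _ _⟩, ?_, Finset.mem_insert_of_mem hbS, ?_⟩
      · rw [Finset.coe_insert]
        exact hchain.insert (fun x hx _ => Or.inl (hbd x hx).1)
      · intro x hx
        rcases Finset.mem_insert.mp hx with rfl | hx'
        · exact ⟨le_rfl, le_of_lt hab⟩
        · exact hbd x hx'

lemma sum_mob_top (T : α) (hT : ∀ c, c ≤ T) (a : α) :
    ∑ c ∈ Finset.univ.filter (fun c => a ≤ c), mob c T = if a = T then 1 else 0 := by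
  have hfil : Finset.univ.filter (fun c : α => a ≤ c) =
      Finset.univ.filter (fun c => a ≤ c ∧ c ≤ T) := by
    apply Finset.filter_congr
    intro c _
    simp [hT c]
  by_cases h : a = T
  · subst h
    have : Finset.univ.filter (fun c : α => a ≤ c) = {a} := by
      ext c
      simp only [Finset.mem_filter, Finset.mem_univ, true_and, Finset.mem_singleton]
      exact ⟨fun hc => (le_antisymm (hT c) hc).symm ▸ rfl, fun hc => hc ▸ le_rfl⟩
    rw [this, Finset.sum_singleton, mob_self, if_pos rfl]
  · rw [hfil, sum_mob_lt ((hT a).lt_of_ne h), if_neg h]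

end Mob2

section Graph

variable {V : Type} [Fintype V] [DecidableEq V]

lemma reach_ind {W : Type} {G : SimpleGraph W} {P : W → Prop}
    (step : ∀ a b, G.Adj a b → P a → P b) :
    ∀ {u v : W}, G.Reachable u v → P u → P v := by
  intro u v h hu
  obtain ⟨w⟩ := h
  induction w with
  | nil => exact hu
  | cons hadj _ ih => exact ih (step _ _ hadj hu)

lemma cc_bot_card : Nat.card (⊥ : SimpleGraph V).ConnectedComponent = Fintype.card V := by
  rw [← Nat.card_eq_fintype_card]
  symm
  apply Nat.card_eq_of_bijective (fun v => (⊥ : SimpleGraph V).connectedComponentMk v)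
  constructor
  · intro u v h
    exact SimpleGraph.reachable_bot.mp (SimpleGraph.ConnectedComponent.exact h)
  · intro c
    obtain ⟨v, rfl⟩ := Quot.exists_rep c
    exact ⟨v, rfl⟩

lemma cc_card_le_of_le {G H : SimpleGraph V} (h : G ≤ H) :
    Nat.card H.ConnectedComponent ≤ Nat.card G.ConnectedComponent := by
  apply Nat.card_le_card_of_surjective
    (fun c => c.map (SimpleGraph.Hom.ofLE h))
  intro c
  obtain ⟨v, rfl⟩ := Quot.exists_rep c
  exact ⟨G.connectedComponentMk v, rfl⟩

lemma cc_card_eq_one_iff [Nonempty V] {G : SimpleGraph V} :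
    Nat.card G.ConnectedComponent = 1 ↔ ∀ u v : V, G.Reachable u v := by
  rw [Nat.card_eq_one_iff_unique]
  constructor
  · rintro ⟨hsub, -⟩ u v
    exact SimpleGraph.ConnectedComponent.exact
      (@Subsingleton.elim _ hsub (G.connectedComponentMk u) (G.connectedComponentMk v))
  · intro h
    refine ⟨⟨fun x y => ?_⟩, ⟨G.connectedComponentMk (Classical.arbitrary V)⟩⟩
    obtain ⟨u, rfl⟩ := Quot.exists_rep x
    obtain ⟨v, rfl⟩ := Quot.exists_rep y
    exact SimpleGraph.ConnectedComponent.sound (h u v)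

lemma reach_insert {A : Finset (Sym2 V)} {u v : V} {a b : V}
    (h : (SimpleGraph.fromEdgeSet (↑(insert s(u, v) A) : Set (Sym2 V))).Reachable a b) :
    (SimpleGraph.fromEdgeSet (↑A : Set (Sym2 V))).Reachable a b ∨
    ((SimpleGraph.fromEdgeSet (↑A : Set (Sym2 V))).Reachable a u ∧
      (SimpleGraph.fromEdgeSet (↑A : Set (Sym2 V))).Reachable v b) ∨
    ((SimpleGraph.fromEdgeSet (↑A : Set (Sym2 V))).Reachable a v ∧
      (SimpleGraph.fromEdgeSet (↑A : Set (Sym2 V))).Reachable u b) := by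
  obtain ⟨w⟩ := h
  induction w with
  | nil => exact Or.inl (SimpleGraph.Reachable.refl _)
  | @cons a x b hadj p ih =>
    rw [SimpleGraph.fromEdgeSet_adj] at hadj
    obtain ⟨hmem, hne⟩ := hadj
    rw [Finset.coe_insert, Set.mem_insert_iff] at hmem
    rcases hmem with heq | hmemA
    · rcases Sym2.eq_iff.mp heq with ⟨rfl, rfl⟩ | ⟨rfl, rfl⟩
      · rcases ih with h1 | ⟨h1, h2⟩ | ⟨h1, h2⟩
        · exact Or.inr (Or.inl ⟨SimpleGraph.Reachable.refl _, h1⟩)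
        · exact Or.inl (h1.symm.trans h2)
        · exact Or.inl h2
      · rcases ih with h1 | ⟨h1, h2⟩ | ⟨h1, h2⟩
        · exact Or.inr (Or.inr ⟨SimpleGraph.Reachable.refl _, h1⟩)
        · exact Or.inl h2
        · exact Or.inl (h1.symm.trans h2)
    · have hAdj : (SimpleGraph.fromEdgeSet (↑A : Set (Sym2 V))).Adj a x :=
        (SimpleGraph.fromEdgeSet_adj _).mpr ⟨hmemA, hne⟩
      rcases ih with h1 | ⟨h1, h2⟩ | ⟨h1, h2⟩
      · exact Or.inl (hAdj.reachable.trans h1)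
      · exact Or.inr (Or.inl ⟨hAdj.reachable.trans h1, h2⟩)
      · exact Or.inr (Or.inr ⟨hAdj.reachable.trans h1, h2⟩)

lemma cc_insert_card {A : Finset (Sym2 V)} {u v : V} (huv : u ≠ v) :
    Nat.card (SimpleGraph.fromEdgeSet (↑A : Set (Sym2 V))).ConnectedComponent ≤
    Nat.card (SimpleGraph.fromEdgeSet (↑(insert s(u, v) A) : Set (Sym2 V))).ConnectedComponent
      + 1 := by
  set G1 := SimpleGraph.fromEdgeSet (↑A : Set (Sym2 V)) with hG1
  set G2 := SimpleGraph.fromEdgeSet (↑(insert s(u, v) A) : Set (Sym2 V)) with hG2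
  have hle : G1 ≤ G2 := by
    rw [hG1, hG2]
    apply SimpleGraph.fromEdgeSet_mono
    rw [Finset.coe_insert]
    exact Set.subset_insert _ _
  have hinj : Function.Injective (fun c : G1.ConnectedComponent =>
      if c = G1.connectedComponentMk v then (none : Option G2.ConnectedComponent)
      else some (c.map (SimpleGraph.Hom.ofLE hle))) := by
    intro x y hxy
    dsimp only at hxy
    by_cases hx : x = G1.connectedComponentMk v <;>
      by_cases hy : y = G1.connectedComponentMk v
    · rw [hx, hy]
    · rw [if_pos hx, if_neg hy] at hxy; exact absurd hxy.symm (Option.some_ne_none _)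
    · rw [if_neg hx, if_pos hy] at hxy; exact absurd hxy (Option.some_ne_none _)
    · rw [if_neg hx, if_neg hy] at hxy
      have hmap := Option.some_injective _ hxy
      obtain ⟨a, rfl⟩ := Quot.exists_rep x
      obtain ⟨b, rfl⟩ := Quot.exists_rep y
      have : G2.Reachable a b := SimpleGraph.ConnectedComponent.exact hmap
      rcases reach_insert this with h1 | ⟨h1, h2⟩ | ⟨h1, h2⟩
      · exact SimpleGraph.ConnectedComponent.sound h1
      · exact absurd (SimpleGraph.ConnectedComponent.sound h2.symm) hy
      · exact absurd (SimpleGraph.ConnectedComponent.sound h1) hx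
  have hcard := Nat.card_le_card_of_injective _ hinj
  have : Nat.card (Option G2.ConnectedComponent) = Nat.card G2.ConnectedComponent + 1 := by
    letI : Fintype G2.ConnectedComponent := Fintype.ofFinite _
    rw [Nat.card_eq_fintype_card, Nat.card_eq_fintype_card, Fintype.card_option]
  omega

lemma card_le_cc_add_card (A : Finset (Sym2 V)) (hA : ∀ e ∈ A, ¬e.IsDiag) :
    Fintype.card V ≤
      Nat.card (SimpleGraph.fromEdgeSet (↑A : Set (Sym2 V))).ConnectedComponent + A.card := by
  induction A using Finset.induction_on with
  | empty =>
      rw [Finset.coe_empty, SimpleGraph.fromEdgeSet_empty, cc_bot_card, Finset.card_empty]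
      omega
  | @insert e A' heA' ih =>
      have hdiag : ¬e.IsDiag := hA e (Finset.mem_insert_self _ _)
      have hA' : ∀ e' ∈ A', ¬e'.IsDiag := fun e' he' => hA e' (Finset.mem_insert_of_mem he')
      have hih := ih hA'
      rw [Finset.card_insert_of_notMem heA']
      revert hdiag
      refine Sym2.ind (fun u v hdiag => ?_) e
      have huv : u ≠ v := fun h => hdiag (Sym2.mk_isDiag_iff.mpr h)
      have := cc_insert_card (A := A') huv
      omega

end Graph

section Kappa

variable {V : Type} [Fintype V] [DecidableEq V]

lemma onePart_parts [Nonempty V] : (onePart V).parts = {Finset.univ} := by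
  show ({(Finset.univ : Finset V)} : Finset (Finset V)).erase ⊥ = {Finset.univ}
  apply Finset.erase_eq_of_notMem
  rw [Finset.mem_singleton, bot_eq_empty]
  exact fun h => (Finset.univ_nonempty).ne_empty h.symm

lemma le_onePart [Nonempty V] (π : SetPart V) : π ≤ onePart V := by
  intro b _
  exact ⟨Finset.univ, by rw [onePart_parts]; exact Finset.mem_singleton_self _,
    Finset.subset_univ b⟩

def kappa (A : Finset (Sym2 V)) : SetPart V :=
  Finpartition.ofSetoid (SimpleGraph.fromEdgeSet (↑A : Set (Sym2 V))).reachableSetoid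

lemma mem_part_kappa (A : Finset (Sym2 V)) (x y : V) :
    y ∈ (kappa A).part x ↔ (SimpleGraph.fromEdgeSet (↑A : Set (Sym2 V))).Reachable x y :=
  Finpartition.mem_part_ofSetoid_iff_rel

lemma kappa_le_iff (A : Finset (Sym2 V)) (hA : ∀ e ∈ A, ¬e.IsDiag) (π : SetPart V) :
    kappa A ≤ π ↔ ∀ e ∈ A, ∃ B ∈ π.parts, ∀ w ∈ e, w ∈ B := by
  constructor
  · intro hle e he
    revert he
    refine Sym2.ind (fun y z he => ?_) e
    have hyz : y ≠ z := fun h => hA _ he (Sym2.mk_isDiag_iff.mpr h)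
    have hadj : (SimpleGraph.fromEdgeSet (↑A : Set (Sym2 V))).Adj y z :=
      (SimpleGraph.fromEdgeSet_adj _).mpr ⟨Finset.mem_coe.mpr he, hyz⟩
    have hz : z ∈ (kappa A).part y := (mem_part_kappa A y z).mpr hadj.reachable
    have hy : y ∈ (kappa A).part y := (kappa A).mem_part (Finset.mem_univ y)
    obtain ⟨B, hB, hsub⟩ := hle ((kappa A).part_mem.mpr (Finset.mem_univ y))
    refine ⟨B, hB, fun w hw => ?_⟩
    rcases Sym2.mem_iff.mp hw with rfl | rfl
    · exact hsub hy
    · exact hsub hz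
  · intro hint p hp
    obtain ⟨x, hx⟩ := (kappa A).nonempty_of_mem_parts hp
    have hpx : (kappa A).part x = p := (kappa A).part_eq_of_mem hp hx
    refine ⟨π.part x, π.part_mem.mpr (Finset.mem_univ x), ?_⟩
    intro y hy
    rw [← hpx] at hy
    have hreach := (mem_part_kappa A x y).mp hy
    refine reach_ind (P := fun z => z ∈ π.part x) ?_ hreach (π.mem_part (Finset.mem_univ x))
    intro z z' hadj hz
    rw [SimpleGraph.fromEdgeSet_adj] at hadj
    obtain ⟨B, hB, hw⟩ := hint _ (Finset.mem_coe.mp hadj.1)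
    have hzB : z ∈ B := hw z (Sym2.mem_mk_left z z')
    have hz'B : z' ∈ B := hw z' (Sym2.mem_mk_right z z')
    have : π.part x = B := π.eq_of_mem_parts (π.part_mem.mpr (Finset.mem_univ x)) hB hz hzB
    rw [this]
    exact hz'B

lemma kappa_eq_top_iff [Nonempty V] (A : Finset (Sym2 V)) :
    kappa A = onePart V ↔
      ∀ u v : V, (SimpleGraph.fromEdgeSet (↑A : Set (Sym2 V))).Reachable u v := by
  constructor
  · intro h u v
    apply (mem_part_kappa A u v).mp
    have : (kappa A).part u = Finset.univ := by
      rw [h]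
      exact (onePart V).part_eq_of_mem
        (by rw [onePart_parts]; exact Finset.mem_singleton_self _) (Finset.mem_univ u)
    rw [this]
    exact Finset.mem_univ v
  · intro h
    apply le_antisymm (le_onePart _)
    intro b hb
    rw [onePart_parts, Finset.mem_singleton] at hb
    subst hb
    refine ⟨(kappa A).part (Classical.arbitrary V),
      (kappa A).part_mem.mpr (Finset.mem_univ _), ?_⟩
    intro x _
    exact (mem_part_kappa A _ x).mpr (h _ x)

lemma core_sum [Nonempty V] (G : SimpleGraph V) (E : Finset (Sym2 V)) (hE : ↑E = G.edgeSet) :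
    (∑ π ∈ (Finset.univ : Finset (SetPart V)).filter
        (fun π => ∀ B ∈ π.parts, ∀ b c : V, G.Adj b c → ¬(b ∈ B ∧ c ∈ B)),
      mob π (onePart V))
      = ∑ A ∈ E.powerset.filter (fun A : Finset (Sym2 V) => ∀ u v : V,
          (SimpleGraph.fromEdgeSet (↑A : Set (Sym2 V))).Reachable u v),
        (-1 : ℤ) ^ A.card := by
  have hdiag : ∀ e ∈ E, ¬e.IsDiag := fun e he =>
    G.not_isDiag_of_mem_edgeSet (hE ▸ Finset.mem_coe.mpr he)
  set intE : SetPart V → Finset (Sym2 V) :=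
    fun π => E.filter (fun e => ∃ B ∈ π.parts, ∀ w ∈ e, w ∈ B) with hintE
  have hstab : ∀ π : SetPart V,
      (∀ B ∈ π.parts, ∀ b c : V, G.Adj b c → ¬(b ∈ B ∧ c ∈ B)) ↔ intE π = ∅ := by
    intro π
    constructor
    · intro hs
      rw [Finset.eq_empty_iff_forall_notMem]
      intro e he
      rw [hintE, Finset.mem_filter] at he
      revert he
      refine Sym2.ind (fun x y he => ?_) e
      obtain ⟨hxyE, B, hB, hw⟩ := he
      have hadj : G.Adj x y := (SimpleGraph.mem_edgeSet G).mp (hE ▸ Finset.mem_coe.mpr hxyE)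
      exact hs B hB x y hadj ⟨hw x (Sym2.mem_mk_left x y), hw y (Sym2.mem_mk_right x y)⟩
    · intro hempty B hB b c hadj ⟨hbB, hcB⟩
      have hbcE : s(b, c) ∈ E := Finset.mem_coe.mp (hE ▸ (SimpleGraph.mem_edgeSet G).mpr hadj)
      have : s(b, c) ∈ intE π := by
        rw [hintE, Finset.mem_filter]
        refine ⟨hbcE, B, hB, fun w hw => ?_⟩
        rcases Sym2.mem_iff.mp hw with rfl | rfl
        · exact hbB
        · exact hcB
      rw [hempty] at this
      exact absurd this (Finset.notMem_empty _)
  have hpow : ∀ π : SetPart V, (intE π).powerset =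
      E.powerset.filter (fun A => kappa A ≤ π) := by
    intro π
    ext A
    rw [Finset.mem_powerset, Finset.mem_filter, Finset.mem_powerset]
    constructor
    · intro hsub
      have hAE : A ⊆ E := hsub.trans (Finset.filter_subset _ _)
      refine ⟨hAE, (kappa_le_iff A (fun e he => hdiag e (hAE he)) π).mpr ?_⟩
      intro e he
      exact (Finset.mem_filter.mp (hsub he)).2
    · rintro ⟨hAE, hκ⟩
      intro e he
      rw [hintE, Finset.mem_filter]
      exact ⟨hAE he, (kappa_le_iff A (fun e' he' => hdiag e' (hAE he')) π).mp hκ e he⟩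
  calc
    (∑ π ∈ (Finset.univ : Finset (SetPart V)).filter
        (fun π => ∀ B ∈ π.parts, ∀ b c : V, G.Adj b c → ¬(b ∈ B ∧ c ∈ B)),
      mob π (onePart V))
      = ∑ π : SetPart V, (if (∀ B ∈ π.parts, ∀ b c : V, G.Adj b c → ¬(b ∈ B ∧ c ∈ B))
          then (1 : ℤ) else 0) * mob π (onePart V) := by
        rw [Finset.sum_filter]
        exact Finset.sum_congr rfl (fun π _ => by rw [ite_mul, one_mul, zero_mul])
    _ = ∑ π : SetPart V,
        (∑ A ∈ (intE π).powerset, (-1 : ℤ) ^ A.card) * mob π (onePart V) := by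
        apply Finset.sum_congr rfl
        intro π _
        rw [Finset.sum_powerset_neg_one_pow_card, if_congr ((hstab π).symm) rfl rfl]
    _ = ∑ π : SetPart V, ∑ A ∈ E.powerset,
        (if kappa A ≤ π then (-1 : ℤ) ^ A.card * mob π (onePart V) else 0) := by
        apply Finset.sum_congr rfl
        intro π _
        rw [hpow π, Finset.sum_mul, Finset.sum_filter]
    _ = ∑ A ∈ E.powerset, ∑ π : SetPart V,
        (if kappa A ≤ π then (-1 : ℤ) ^ A.card * mob π (onePart V) else 0) :=
        Finset.sum_comm
    _ = ∑ A ∈ E.powerset, (-1 : ℤ) ^ A.card *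
        (if kappa A = onePart V then 1 else 0) := by
        apply Finset.sum_congr rfl
        intro A _
        rw [← Finset.sum_filter, ← Finset.mul_sum,
          sum_mob_top (onePart V) le_onePart (kappa A)]
        exact congrArg (fun z => (-1 : ℤ) ^ A.card * z)
          (@if_congr ℤ _ _ (Classical.propDecidable _) inferInstance _ _ _ _ Iff.rfl rfl rfl)
    _ = ∑ A ∈ E.powerset, (if (∀ u v : V,
          (SimpleGraph.fromEdgeSet (↑A : Set (Sym2 V))).Reachable u v)
          then (-1 : ℤ) ^ A.card else 0) := by
        apply Finset.sum_congr rfl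
        intro A _
        rw [if_congr (kappa_eq_top_iff A) rfl rfl, mul_ite, mul_one, mul_zero]
    _ = ∑ A ∈ E.powerset.filter (fun A : Finset (Sym2 V) => ∀ u v : V,
          (SimpleGraph.fromEdgeSet (↑A : Set (Sym2 V))).Reachable u v),
        (-1 : ℤ) ^ A.card := (Finset.sum_filter _ _).symm

end Kappa

section Crossing

variable {β : Type} [LinearOrder β] [Fintype β] [DecidableEq β]

lemma preconn_isConnectedP (ρ : SetPart β) (h : (crossGraph ρ).Preconnected) :
    IsConnectedP ρ := by
  intro I hne hneq hInt hblocks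
  obtain ⟨x, hxI⟩ := hne
  obtain ⟨b₀, hb₀, hxb₀⟩ := ρ.exists_mem (Finset.mem_univ x)
  have hb₀I : b₀ ⊆ I := (hblocks b₀ hb₀).resolve_right
    (fun hd => (Finset.disjoint_left.mp hd hxb₀) hxI)
  have hy : ∃ y, y ∉ I := by
    by_contra hy
    push_neg at hy
    exact hneq (Finset.eq_univ_iff_forall.mpr hy)
  obtain ⟨y, hyI⟩ := hy
  obtain ⟨c₀, hc₀, hyc₀⟩ := ρ.exists_mem (Finset.mem_univ y)
  have step : ∀ a c : {b // b ∈ ρ.parts}, (crossGraph ρ).Adj a c → a.1 ⊆ I → c.1 ⊆ I := by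
    intro a c hadj haI
    rcases hblocks c.1 c.2 with hcI | hd
    · exact hcI
    exfalso
    rcases hadj.2 with ⟨i, hi, j, hj, k, hk, l, hl, h1, h2, h3⟩ |
      ⟨i, hi, j, hj, k, hk, l, hl, h1, h2, h3⟩
    · exact Finset.disjoint_left.mp hd hk
        (hInt i (haI hi) j (haI hj) k (le_of_lt h1) (le_of_lt h2))
    · exact Finset.disjoint_left.mp hd hj
        (hInt k (haI hk) l (haI hl) j (le_of_lt h2) (le_of_lt h3))
  have : c₀ ⊆ I :=
    reach_ind (P := fun v : {b // b ∈ ρ.parts} => v.1 ⊆ I) step (h ⟨b₀, hb₀⟩ ⟨c₀, hc₀⟩) hb₀I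
  exact hyI (this hyc₀)

def suppF (ρ : SetPart β) (v : {b // b ∈ ρ.parts}) : Finset β :=
  Finset.univ.filter (fun x => ∃ c : {b // b ∈ ρ.parts},
    (crossGraph ρ).Reachable v c ∧ x ∈ c.1)

lemma mem_suppF {ρ : SetPart β} {v : {b // b ∈ ρ.parts}} {x : β} :
    x ∈ suppF ρ v ↔ ∃ c : {b // b ∈ ρ.parts}, (crossGraph ρ).Reachable v c ∧ x ∈ c.1 := by
  simp [suppF]

lemma suppF_nonempty (ρ : SetPart β) (v : {b // b ∈ ρ.parts}) : (suppF ρ v).Nonempty := by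
  obtain ⟨x, hx⟩ := ρ.nonempty_of_mem_parts v.2
  exact ⟨x, mem_suppF.mpr ⟨v, SimpleGraph.Reachable.refl v, hx⟩⟩

def hullF (ρ : SetPart β) (v : {b // b ∈ ρ.parts}) : Finset β :=
  Finset.univ.filter (fun x => (suppF ρ v).min' (suppF_nonempty ρ v) ≤ x ∧
    x ≤ (suppF ρ v).max' (suppF_nonempty ρ v))

lemma mem_hullF {ρ : SetPart β} {v : {b // b ∈ ρ.parts}} {x : β} :
    x ∈ hullF ρ v ↔ (suppF ρ v).min' (suppF_nonempty ρ v) ≤ x ∧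
      x ≤ (suppF ρ v).max' (suppF_nonempty ρ v) := by
  simp [hullF]

lemma suppF_subset_hullF (ρ : SetPart β) (v : {b // b ∈ ρ.parts}) :
    suppF ρ v ⊆ hullF ρ v := by
  intro x hx
  exact mem_hullF.mpr ⟨Finset.min'_le _ _ hx, Finset.le_max' _ _ hx⟩

lemma block_subset_suppF {ρ : SetPart β} {v c : {b // b ∈ ρ.parts}}
    (h : (crossGraph ρ).Reachable v c) : c.1 ⊆ suppF ρ v :=
  fun x hx => mem_suppF.mpr ⟨c, h, hx⟩

lemma hull_point {ρ : SetPart β} {v : {b // b ∈ ρ.parts}} {x : β} (hx : x ∈ hullF ρ v) :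
    ∃ c : {b // b ∈ ρ.parts}, (crossGraph ρ).Reachable v c ∧
      c.1.min' (ρ.nonempty_of_mem_parts c.2) ≤ x ∧ x ≤ c.1.max' (ρ.nonempty_of_mem_parts c.2) := by
  by_contra hno
  push_neg at hno
  have hno' : ∀ c : {b // b ∈ ρ.parts}, (crossGraph ρ).Reachable v c →
      x < c.1.min' (ρ.nonempty_of_mem_parts c.2) ∨ c.1.max' (ρ.nonempty_of_mem_parts c.2) < x := by
    intro c hc
    rcases le_or_gt (c.1.min' (ρ.nonempty_of_mem_parts c.2)) x with h1 | h1
    · exact Or.inr (hno c hc h1)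
    · exact Or.inl h1
  rw [mem_hullF] at hx
  obtain ⟨hmx, hxM⟩ := hx
  -- the block containing the min of the support
  have hmmem := (suppF ρ v).min'_mem (suppF_nonempty ρ v)
  obtain ⟨cm, hcm, hmcm⟩ := mem_suppF.mp hmmem
  -- the block containing the max of the support
  have hMmem := (suppF ρ v).max'_mem (suppF_nonempty ρ v)
  obtain ⟨cM, hcM, hMcM⟩ := mem_suppF.mp hMmem
  -- walk induction: all reachable blocks lie strictly below x
  have step : ∀ a c : {b // b ∈ ρ.parts}, (crossGraph ρ).Adj a c →
      ((crossGraph ρ).Reachable v a ∧ a.1.max' (ρ.nonempty_of_mem_parts a.2) < x) →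
      ((crossGraph ρ).Reachable v c ∧ c.1.max' (ρ.nonempty_of_mem_parts c.2) < x) := by
    rintro a c hadj ⟨hra, hamax⟩
    have hrc : (crossGraph ρ).Reachable v c := hra.trans hadj.reachable
    refine ⟨hrc, ?_⟩
    rcases hno' c hrc with hlt | hlt
    · exfalso
      rcases hadj.2 with ⟨i, hi, j, hj, k, hk, l, hl, h1, h2, h3⟩ |
        ⟨i, hi, j, hj, k, hk, l, hl, h1, h2, h3⟩
      · have h4 : j ≤ a.1.max' (ρ.nonempty_of_mem_parts a.2) := Finset.le_max' _ _ hj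
        have h5 : c.1.min' (ρ.nonempty_of_mem_parts c.2) ≤ k := Finset.min'_le _ _ hk
        exact absurd (h2.trans_le (h4.trans (hamax.le.trans (hlt.le.trans h5)))) (lt_irrefl k)
      · have h4 : k ≤ a.1.max' (ρ.nonempty_of_mem_parts a.2) := Finset.le_max' _ _ hk
        have h5 : c.1.min' (ρ.nonempty_of_mem_parts c.2) ≤ i := Finset.min'_le _ _ hi
        exact absurd (h1.trans_le (h4.trans (hamax.le.trans (hlt.le.trans h5)))) (lt_irrefl i)
    · exact hlt
  have base : (crossGraph ρ).Reachable v cm ∧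
      cm.1.max' (ρ.nonempty_of_mem_parts cm.2) < x := by
    refine ⟨hcm, ?_⟩
    rcases hno' cm hcm with hlt | hlt
    · exfalso
      have h4 : cm.1.min' (ρ.nonempty_of_mem_parts cm.2) ≤ (suppF ρ v).min' (suppF_nonempty ρ v) :=
        Finset.min'_le _ _ hmcm
      exact absurd ((hlt.trans_le h4).trans_le hmx) (lt_irrefl x)
    · exact hlt
  obtain ⟨-, hmaxlt⟩ := reach_ind
    (P := fun c : {b // b ∈ ρ.parts} => (crossGraph ρ).Reachable v c ∧
      c.1.max' (ρ.nonempty_of_mem_parts c.2) < x) step (hcm.symm.trans hcM) base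
  have h4 : (suppF ρ v).max' (suppF_nonempty ρ v) ≤ cM.1.max' (ρ.nonempty_of_mem_parts cM.2) :=
    Finset.le_max' _ _ hMcM
  exact absurd ((hxM.trans h4).trans_lt hmaxlt) (lt_irrefl x)

end Crossing
section Crossing2

variable {β : Type} [LinearOrder β] [Fintype β] [DecidableEq β]

lemma blockA {ρ : SetPart β} {v d : {b // b ∈ ρ.parts}}
    (hnr : ¬ (crossGraph ρ).Reachable v d) {x : β} (hxd : x ∈ d.1) (hxH : x ∈ hullF ρ v) :
    d.1 ⊆ hullF ρ v := by
  intro y hyd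
  by_contra hyH
  obtain ⟨c, hrc, hminc, hmaxc⟩ := hull_point hxH
  have hxnc : x ∉ c.1 := by
    intro hxc
    have : c.1 = d.1 := ρ.eq_of_mem_parts c.2 d.2 hxc hxd
    exact hnr (Subtype.ext this ▸ hrc)
  have hcd : c ≠ d := fun h => hxnc (h ▸ hxd)
  have hminlt : c.1.min' (ρ.nonempty_of_mem_parts c.2) < x :=
    lt_of_le_of_ne hminc (fun h => hxnc (h ▸ c.1.min'_mem _))
  have hmaxgt : x < c.1.max' (ρ.nonempty_of_mem_parts c.2) :=
    lt_of_le_of_ne hmaxc (fun h => hxnc (h.symm ▸ c.1.max'_mem _))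
  have hnoadj : ¬ (crossGraph ρ).Adj c d := fun h => hnr (hrc.trans h.reachable)
  rw [mem_hullF] at hxH
  rw [mem_hullF] at hyH
  push_neg at hyH
  rcases lt_or_ge y ((suppF ρ v).min' (suppF_nonempty ρ v)) with hy | hy
  · -- y < m : Crosses d c with i = y, j = x ∈ d, k = min c, l = max c
    apply hnoadj
    refine ⟨hcd, Or.inr ?_⟩
    refine ⟨y, hyd, x, hxd, c.1.min' (ρ.nonempty_of_mem_parts c.2),
      c.1.min'_mem (ρ.nonempty_of_mem_parts c.2), c.1.max' (ρ.nonempty_of_mem_parts c.2),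
      c.1.max'_mem (ρ.nonempty_of_mem_parts c.2), ?_, ?_, ?_⟩
    · exact hy.trans_le (Finset.min'_le _ _ (block_subset_suppF hrc (c.1.min'_mem _)))
    · exact hminlt
    · exact hmaxgt
  · -- y > M : Crosses c d with i = min c, j = max c, k = x, l = y
    have hy' : (suppF ρ v).max' (suppF_nonempty ρ v) < y := hyH hy
    apply hnoadj
    refine ⟨hcd, Or.inl ?_⟩
    refine ⟨c.1.min' (ρ.nonempty_of_mem_parts c.2),
      c.1.min'_mem (ρ.nonempty_of_mem_parts c.2), c.1.max' (ρ.nonempty_of_mem_parts c.2),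
      c.1.max'_mem (ρ.nonempty_of_mem_parts c.2), x, hxd, y, hyd, ?_, ?_, ?_⟩
    · exact hminlt
    · exact hmaxgt
    · exact (Finset.le_max' _ _ (block_subset_suppF hrc (c.1.max'_mem _))).trans_lt hy'

lemma blockB {ρ : SetPart β} {v d : {b // b ∈ ρ.parts}}
    (hnr : ¬ (crossGraph ρ).Reachable v d) {x : β} (hxd : x ∈ d.1) (hxH : x ∈ hullF ρ v) :
    suppF ρ d ⊆ hullF ρ v := by
  intro z hz
  obtain ⟨e, hre, hze⟩ := mem_suppF.mp hz
  suffices h : ¬ (crossGraph ρ).Reachable v e ∧ e.1 ⊆ hullF ρ v by exact h.2 hze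
  refine reach_ind (P := fun e : {b // b ∈ ρ.parts} =>
    ¬ (crossGraph ρ).Reachable v e ∧ e.1 ⊆ hullF ρ v) ?_ hre
    ⟨hnr, blockA hnr hxd hxH⟩
  rintro a c hadj ⟨hna, haH⟩
  have hnc : ¬ (crossGraph ρ).Reachable v c := fun h => hna (h.trans hadj.symm.reachable)
  have hmono : IsInterval (hullF ρ v) := by
    intro p hp q hq r hpr hrq
    rw [mem_hullF] at hp hq ⊢
    exact ⟨hp.1.trans hpr, hrq.trans hq.2⟩
  -- find a point of c inside the hull
  obtain ⟨x', hx'c, hx'H⟩ : ∃ x', x' ∈ c.1 ∧ x' ∈ hullF ρ v := by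
    rcases hadj.2 with ⟨i, hi, j, hj, k, hk, l, hl, h1, h2, h3⟩ |
      ⟨i, hi, j, hj, k, hk, l, hl, h1, h2, h3⟩
    · exact ⟨k, hk, hmono i (haH hi) j (haH hj) k h1.le h2.le⟩
    · exact ⟨j, hj, hmono k (haH hk) l (haH hl) j h2.le h3.le⟩
  exact ⟨hnc, blockA hnc hx'c hx'H⟩

lemma not_isConnectedP_of_not_preconn (ρ : SetPart β)
    (hnp : ¬ (crossGraph ρ).Preconnected) : ¬ IsConnectedP ρ := by
  rw [SimpleGraph.Preconnected] at hnp
  push_neg at hnp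
  obtain ⟨v₀, w₀, hvw⟩ := hnp
  obtain ⟨v, -, hvmin⟩ := Finset.exists_min_image Finset.univ (fun u => (hullF ρ u).card)
    ⟨v₀, Finset.mem_univ _⟩
  have hw : ∃ w, ¬ (crossGraph ρ).Reachable v w := by
    by_contra hall
    push_neg at hall
    exact hvw ((hall v₀).symm.trans (hall w₀))
  obtain ⟨w, hvw'⟩ := hw
  intro hconn
  have hmem_m : (suppF ρ v).min' (suppF_nonempty ρ v) ∈ hullF ρ v :=
    suppF_subset_hullF ρ v ((suppF ρ v).min'_mem _)
  have hInt : IsInterval (hullF ρ v) := by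
    intro p hp q hq r hpr hrq
    rw [mem_hullF] at hp hq ⊢
    exact ⟨hp.1.trans hpr, hrq.trans hq.2⟩
  have hneq : hullF ρ v ≠ Finset.univ := by
    intro heq
    obtain ⟨x₀, hx₀⟩ := ρ.nonempty_of_mem_parts w.2
    have hx₀H : x₀ ∈ hullF ρ v := heq ▸ Finset.mem_univ x₀
    have hsupp : suppF ρ w ⊆ hullF ρ v := blockB hvw' hx₀ hx₀H
    have hhull : hullF ρ w ⊆ hullF ρ v := by
      intro z hz
      rw [mem_hullF] at hz ⊢
      have h1 := mem_hullF.mp (hsupp ((suppF ρ w).min'_mem (suppF_nonempty ρ w)))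
      have h2 := mem_hullF.mp (hsupp ((suppF ρ w).max'_mem (suppF_nonempty ρ w)))
      exact ⟨h1.1.trans hz.1, hz.2.trans h2.2⟩
    have heq2 : hullF ρ w = hullF ρ v :=
      Finset.eq_of_subset_of_card_le hhull (hvmin w (Finset.mem_univ w))
    -- the two support minima coincide
    have hmz : (suppF ρ v).min' (suppF_nonempty ρ v) = (suppF ρ w).min' (suppF_nonempty ρ w) := by
      have h1 : (suppF ρ v).min' (suppF_nonempty ρ v) ∈ hullF ρ w := heq2 ▸ hmem_m
      have h2 : (suppF ρ w).min' (suppF_nonempty ρ w) ∈ hullF ρ v :=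
        hsupp ((suppF ρ w).min'_mem (suppF_nonempty ρ w))
      rw [mem_hullF] at h1 h2
      exact le_antisymm h2.1 h1.1
    obtain ⟨c₁, hrc₁, hmc₁⟩ := mem_suppF.mp ((suppF ρ v).min'_mem (suppF_nonempty ρ v))
    obtain ⟨c₂, hrc₂, hmc₂⟩ := mem_suppF.mp ((suppF ρ w).min'_mem (suppF_nonempty ρ w))
    rw [hmz] at hmc₁
    have : c₁ = c₂ := Subtype.ext (ρ.eq_of_mem_parts c₁.2 c₂.2 hmc₁ hmc₂)
    subst this
    exact hvw' (hrc₁.trans hrc₂.symm)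
  refine hconn (hullF ρ v) ⟨_, hmem_m⟩ hneq hInt ?_
  intro b hb
  by_cases hr : (crossGraph ρ).Reachable v ⟨b, hb⟩
  · exact Or.inl ((block_subset_suppF hr).trans (suppF_subset_hullF ρ v))
  · by_cases hmeet : ∃ x ∈ b, x ∈ hullF ρ v
    · obtain ⟨x, hxb, hxH⟩ := hmeet
      exact Or.inl (blockA (d := ⟨b, hb⟩) hr hxb hxH)
    · push_neg at hmeet
      exact Or.inr (Finset.disjoint_left.mpr hmeet)

end Crossing2

section Tutte

variable {V : Type} [Fintype V] [DecidableEq V]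

lemma cc_card_le_card (G : SimpleGraph V) :
    Nat.card G.ConnectedComponent ≤ Fintype.card V := by
  rw [← Nat.card_eq_fintype_card]
  apply Nat.card_le_card_of_surjective G.connectedComponentMk
  intro c
  obtain ⟨v, rfl⟩ := Quot.exists_rep c
  exact ⟨v, rfl⟩

lemma tutte_eval [Nonempty V] (G : SimpleGraph V) (hpre : G.Preconnected)
    (E : Finset (Sym2 V)) (hE : ↑E = G.edgeSet) :
    (-1 : ℤ) ^ (Fintype.card V + 1) * tutteG G 1 0 =
      ∑ A ∈ E.powerset.filter (fun A : Finset (Sym2 V) => ∀ u v : V,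
        (SimpleGraph.fromEdgeSet (↑A : Set (Sym2 V))).Reachable u v),
      (-1 : ℤ) ^ A.card := by
  have hGE : SimpleGraph.fromEdgeSet (↑E : Set (Sym2 V)) = G := by
    rw [hE, SimpleGraph.fromEdgeSet_edgeSet]
  have hEq : @Set.toFinset _ G.edgeSet (Fintype.ofFinite _) = E := by
    apply Finset.coe_injective
    rw [Set.coe_toFinset, hE]
  have hcE : Nat.card (SimpleGraph.fromEdgeSet (↑E : Set (Sym2 V))).ConnectedComponent = 1 := by
    rw [hGE]
    exact cc_card_eq_one_iff.mpr hpre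
  rw [tutteG, hEq, Finset.mul_sum, Finset.sum_filter]
  apply Finset.sum_congr rfl
  intro A hA
  dsimp only
  have hAE : A ⊆ E := Finset.mem_powerset.mp hA
  have hdiagA : ∀ e ∈ A, ¬e.IsDiag := fun e he =>
    G.not_isDiag_of_mem_edgeSet (hE ▸ Finset.mem_coe.mpr (hAE he))
  haveI : Nonempty (SimpleGraph.fromEdgeSet (↑A : Set (Sym2 V))).ConnectedComponent :=
    ⟨(SimpleGraph.fromEdgeSet (↑A : Set (Sym2 V))).connectedComponentMk (Classical.arbitrary V)⟩
  have h1le : 1 ≤ Nat.card (SimpleGraph.fromEdgeSet (↑A : Set (Sym2 V))).ConnectedComponent :=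
    Nat.card_pos
  have hcle : Nat.card (SimpleGraph.fromEdgeSet (↑A : Set (Sym2 V))).ConnectedComponent ≤
    Fintype.card V := cc_card_le_card _
  have hn1 : 1 ≤ Fintype.card V := Fintype.card_pos
  have hVA := card_le_cc_add_card A hdiagA
  rw [hcE]
  by_cases hc1 : Nat.card (SimpleGraph.fromEdgeSet (↑A : Set (Sym2 V))).ConnectedComponent = 1
  · rw [if_pos (cc_card_eq_one_iff.mp hc1), hc1]
    have hzero : Fintype.card V - 1 - (Fintype.card V - 1) = 0 := by omega
    have hle : Fintype.card V - 1 ≤ A.card := by omega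
    have hexp : (Fintype.card V + 1) + (A.card - (Fintype.card V - 1)) = A.card + 2 := by omega
    have h01 : ((0 : ℤ) - 1) = -1 := by norm_num
    rw [hzero, pow_zero, one_mul, h01, ← pow_add, hexp, pow_add]
    norm_num
  · rw [if_neg (fun h => hc1 (cc_card_eq_one_iff.mpr h))]
    have h11 : ((1 : ℤ) - 1) = 0 := by norm_num
    rw [h11, zero_pow (by omega : Fintype.card V - 1 - (Fintype.card V - Nat.card
      (SimpleGraph.fromEdgeSet (↑A : Set (Sym2 V))).ConnectedComponent) ≠ 0), zero_mul, mul_zero]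

end Tutte

/-- The `q = 0` case of the partition-lattice/Tutte identity, for the crossing graph
of a set partition `ρ`. -/
theorem statement19 (n : ℕ) (hn : 1 ≤ n) (ρ : SetPart (Fin n)) :
    (∑ π ∈ (Finset.univ : Finset (SetPart {b // b ∈ ρ.parts})).filter
        (fun π => ∀ B ∈ π.parts, ∀ b c : {b // b ∈ ρ.parts},
          (crossGraph ρ).Adj b c → ¬ (b ∈ B ∧ c ∈ B)),
      mob π (onePart {b // b ∈ ρ.parts})) =
      if IsConnectedP ρ then
        (-1 : ℤ) ^ (ρ.parts.card + 1) * tutteG (crossGraph ρ) 1 0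
      else 0 := by
  haveI : Nonempty (Fin n) := ⟨⟨0, hn⟩⟩
  haveI hV : Nonempty {b // b ∈ ρ.parts} := by
    obtain ⟨b, hb⟩ := ρ.parts_nonempty (by
      rw [bot_eq_empty]
      exact Finset.univ_nonempty.ne_empty)
    exact ⟨⟨b, hb⟩⟩
  set G := crossGraph ρ with hG
  set E : Finset (Sym2 {b // b ∈ ρ.parts}) := @Set.toFinset _ G.edgeSet (Fintype.ofFinite _)
    with hEdef
  have hE : ↑E = G.edgeSet := @Set.coe_toFinset _ G.edgeSet (Fintype.ofFinite _)
  have hGE : SimpleGraph.fromEdgeSet (↑E : Set (Sym2 {b // b ∈ ρ.parts})) = G := by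
    rw [hE, SimpleGraph.fromEdgeSet_edgeSet]
  refine (Eq.trans ?_ (core_sum G E hE)).trans ?_
  · congr 1
  by_cases hconn : IsConnectedP ρ
  · rw [if_pos hconn]
    have hpre : G.Preconnected := by
      by_contra h
      exact not_isConnectedP_of_not_preconn ρ h hconn
    rw [← tutte_eval G hpre E hE]
    have hcard : Fintype.card {b // b ∈ ρ.parts} = ρ.parts.card := Fintype.card_coe _
    rw [hcard]
  · rw [if_neg hconn]
    have hempty : E.powerset.filter (fun A : Finset (Sym2 {b // b ∈ ρ.parts}) =>
        ∀ u v : {b // b ∈ ρ.parts},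
          (SimpleGraph.fromEdgeSet (↑A : Set (Sym2 {b // b ∈ ρ.parts}))).Reachable u v) = ∅ := by
      rw [Finset.filter_eq_empty_iff]
      intro A hA hconnA
      apply hconn
      apply preconn_isConnectedP
      intro u v
      refine (hconnA u v).mono ?_
      have h1 : SimpleGraph.fromEdgeSet (↑A : Set (Sym2 {b // b ∈ ρ.parts})) ≤
          SimpleGraph.fromEdgeSet (↑E : Set (Sym2 {b // b ∈ ρ.parts})) :=
        SimpleGraph.fromEdgeSet_mono (Finset.coe_subset.mpr (Finset.mem_powerset.mp hA))
      rw [hGE] at h1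
      exact h1
    rw [hempty, Finset.sum_empty]


end
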